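/- Let F : [0,∞) → ℝ be defined by F(s) = 3k − (3k² + 2k)/(4·log(2)·s) if k/(2 log 2) ≤ s < (k+1)/(2 log 2) with k ∈ ℕ₀ even (and F(0) = 0), and F(s) = 3k + 1 − (3k² + 4k + 1)/(4·log(2)·s) if k/(2 log 2) ≤ s < (k+1)/(2 log 2) with k ∈ ℕ odd. Then the set of all s ≥ 0 satisfying F(s) = 2s is exactly {0, s₁}, where s₁ = (52·log(2) − √(2704·log(2)² − 1872·log(2))) / (4·log(2)). -/

import Mathlib

/-- The limiting pair correlation function `F(s)` of the sequence `{log(2n-1)/log 2}`: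
for `s` with `k/(2 log 2) ≤ s < (k+1)/(2 log 2)` (i.e. `k = ⌊2·log 2·s⌋`),
`F(s) = 3k - (3k²+2k)/(4 log 2 · s)` for even `k` and
`F(s) = 3k + 1 - (3k²+4k+1)/(4 log 2 · s)` for odd `k` (with `F(0) = 0`). -/
noncomputable def Flim (s : ℝ) : ℝ :=
  let k : ℤ := ⌊2 * Real.log 2 * s⌋
  if Even k then 3 * (k : ℝ) - (3 * (k : ℝ) ^ 2 + 2 * k) / (4 * Real.log 2 * s)
  else 3 * (k : ℝ) + 1 - (3 * (k : ℝ) ^ 2 + 4 * k + 1) / (4 * Real.log 2 * s)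

/-!
Put `u = 2 (log 2) s` and `k = ⌊u⌋`. For `s > 0` the equation `F(s) = 2 s` is, on the `k`-th
interval, the convex quadratic equation `2u² - 2 a_k (log 2) u + b_k log 2 = 0`, where
`F(s) = a_k - b_k / (4 (log 2) s)`. For `1 ≤ k ≤ 16` its discriminant is negative; for `k ≥ 18`
it is negative at both endpoints `k` and `k + 1`, hence on the whole interval; for `k = 17` its
smaller root lies in `[17, 18)` and its larger root beyond `18`. All of this needs only
`9/13 < log 2 < 25/36`.
-/

open Real Set

lemma quadratic_neg_of_mem_Icc {a b c α β x : ℝ} (ha : 0 ≤ a) (hx : x ∈ Icc α β)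
    (hα : a * (α * α) + b * α + c < 0) (hβ : a * (β * β) + b * β + c < 0) :
    a * (x * x) + b * x + c < 0 := by
  obtain ⟨hαx, hxβ⟩ := hx
  rcases hαx.eq_or_lt with rfl | hαx'
  · exact hα
  have hαβ : 0 < β - α := by linarith
  -- `(β - α) f(x) = (β - x) f(α) + (x - α) f(β) - a (x - α) (β - x) (β - α)`
  have key : (β - α) * (a * (x * x) + b * x + c) ≤
      (β - x) * (a * (α * α) + b * α + c) + (x - α) * (a * (β * β) + b * β + c) := by
    nlinarith [mul_nonneg (mul_nonneg ha (sub_nonneg.2 hαx))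
      (mul_nonneg (sub_nonneg.2 hxβ) hαβ.le)]
  nlinarith [mul_nonpos_of_nonneg_of_nonpos (sub_nonneg.2 hxβ) hα.le,
    mul_neg_of_pos_of_neg (sub_pos.2 hαx') hβ]

noncomputable def flimConst (k : ℤ) : ℝ := if Even k then 3 * k else 3 * k + 1

noncomputable def flimNumer (k : ℤ) : ℝ :=
  if Even k then 3 * k ^ 2 + 2 * k else 3 * k ^ 2 + 4 * k + 1

lemma Flim_eq (s : ℝ) :
    Flim s = flimConst ⌊2 * log 2 * s⌋ - flimNumer ⌊2 * log 2 * s⌋ / (4 * log 2 * s) := by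
  unfold Flim flimConst flimNumer
  dsimp only
  split_ifs <;> ring

noncomputable def flimQuad (L : ℝ) (k : ℤ) (u : ℝ) : ℝ :=
  2 * (u * u) + (-2 * flimConst k * L) * u + flimNumer k * L

lemma sub_div_eq_two_mul_iff_flimQuad {L s : ℝ} (k : ℤ) (hL : L ≠ 0) (hs : s ≠ 0) :
    flimConst k - flimNumer k / (4 * L * s) = 2 * s ↔ flimQuad L k (2 * L * s) = 0 := by
  have h : flimQuad L k (2 * L * s) =
      -(4 * L ^ 2 * s) * (flimConst k - flimNumer k / (4 * L * s) - 2 * s) := by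
    unfold flimQuad
    field_simp
    ring
  rw [h, mul_eq_zero, sub_eq_zero]
  simp [hL, hs]

/-- The smaller root of `flimQuad L 17`. -/
noncomputable def flimRoot (L : ℝ) : ℝ := (52 * L - √(2704 * L ^ 2 - 1872 * L)) / 2

section

variable {L : ℝ}

lemma flimQuad_zero_ne_zero {u : ℝ} (hu : u ≠ 0) : flimQuad L 0 u ≠ 0 := by
  simp [flimQuad, flimConst, flimNumer, hu]

lemma flimQuad_ne_zero_of_le_sixteen (hL0 : 0 < L) (hL : L < 25 / 36) {k : ℤ} (hk1 : 1 ≤ k)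
    (hk : k ≤ 16) (u : ℝ) : flimQuad L k u ≠ 0 := by
  refine quadratic_ne_zero_of_discrim_ne_sq (fun r hr => ?_) u
  have hK1 : (1 : ℝ) ≤ k := by exact_mod_cast hk1
  have hdisc : discrim 2 (-2 * flimConst k * L) (flimNumer k * L) < 0 := by
    unfold discrim flimConst flimNumer
    split_ifs with hke
    · have hK : (k : ℝ) ≤ 16 := by exact_mod_cast hk
      have h : 9 * k * L - 6 * k - 4 < 0 := by nlinarith
      nlinarith [mul_pos hL0 (by linarith : (0 : ℝ) < k)]
    · have hK : (k : ℝ) ≤ 15 := by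
        have : k ≤ 15 := by rcases Int.not_even_iff_odd.1 hke with ⟨j, rfl⟩; omega
        exact_mod_cast this
      have h : (3 * k + 1) * L - 2 * (k + 1) < 0 := by nlinarith
      nlinarith [mul_pos hL0 (by linarith : (0 : ℝ) < 3 * k + 1)]
  nlinarith [sq_nonneg r]

lemma flimQuad_neg_of_eighteen_le (hL : 9 / 13 < L) {k : ℤ} (hk : 18 ≤ k) {u : ℝ}
    (hu : u ∈ Icc (k : ℝ) (k + 1)) : flimQuad L k u < 0 := by
  have hK : (18 : ℝ) ≤ k := by exact_mod_cast hk
  unfold flimQuad flimConst flimNumer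
  refine quadratic_neg_of_mem_Icc zero_le_two hu ?_ ?_ <;> split_ifs with hke
  · nlinarith [mul_pos (by linarith : (0 : ℝ) < k) (by linarith : (0 : ℝ) < 52 * L - 36)]
  · have hK' : (19 : ℝ) ≤ k := by
      have : 19 ≤ k := by rcases Int.not_even_iff_odd.1 hke with ⟨j, rfl⟩; omega
      exact_mod_cast this
    have hk2 : (0 : ℝ) ≤ 3 * k ^ 2 - 2 * k - 1 := by nlinarith
    nlinarith [mul_nonneg (by linarith : (0 : ℝ) ≤ 13 * L - 9) hk2]
  · have hk2 : (0 : ℝ) ≤ 3 * k ^ 2 + 4 * k := by nlinarith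
    nlinarith [mul_nonneg (by linarith : (0 : ℝ) ≤ 13 * L - 9) hk2]
  · nlinarith [mul_pos (by linarith : (0 : ℝ) < k + 1) (by linarith : (0 : ℝ) < 13 * L - 9)]

lemma flimRoot_mem_Ico (hL1 : 9 / 13 < L) (hL2 : L < 25 / 36) : flimRoot L ∈ Ico 17 18 := by
  have hlow : 52 * L - 36 < √(2704 * L ^ 2 - 1872 * L) :=
    (lt_sqrt (by linarith)).2 (by nlinarith)
  have hup : √(2704 * L ^ 2 - 1872 * L) < 52 * L - 34 :=
    (sqrt_lt' (by linarith)).2 (by nlinarith)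
  constructor <;> unfold flimRoot <;> linarith

lemma flimQuad_seventeen_eq_zero_iff (hL : 9 / 13 < L) {u : ℝ} (hu : u < 18) :
    flimQuad L 17 u = 0 ↔ u = flimRoot L := by
  set R := √(2704 * L ^ 2 - 1872 * L)
  have hR : R * R = 2704 * L ^ 2 - 1872 * L := mul_self_sqrt (by nlinarith)
  have hdisc : discrim 2 (-2 * flimConst 17 * L) (flimNumer 17 * L) = (2 * R) * (2 * R) := by
    simp only [discrim, flimConst, flimNumer, if_neg (by decide : ¬ Even (17 : ℤ))]
    push_cast
    linear_combination (-4) * hR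
  have hupper : 18 < (-(-2 * flimConst 17 * L) + 2 * R) / (2 * 2) := by
    simp only [flimConst, if_neg (by decide : ¬ Even (17 : ℤ))]
    linarith [sqrt_nonneg (2704 * L ^ 2 - 1872 * L)]
  unfold flimQuad
  rw [quadratic_eq_zero_iff two_ne_zero hdisc, or_iff_right (by linarith)]
  simp only [flimRoot, flimConst, if_neg (by decide : ¬ Even (17 : ℤ))]
  constructor <;> rintro rfl <;> ring

lemma flimQuad_floor_eq_zero_iff (hL1 : 9 / 13 < L) (hL2 : L < 25 / 36) {u : ℝ}
    (hu : 0 < u) : flimQuad L ⌊u⌋ u = 0 ↔ u = flimRoot L := by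
  constructor
  · intro h
    have hk17 : ⌊u⌋ = 17 := by
      have hk0 : 0 ≤ ⌊u⌋ := Int.floor_nonneg.2 hu.le
      by_contra hne
      obtain h0 | ⟨h1, h16⟩ | h18 : ⌊u⌋ = 0 ∨ (1 ≤ ⌊u⌋ ∧ ⌊u⌋ ≤ 16) ∨ 18 ≤ ⌊u⌋ := by omega
      · exact flimQuad_zero_ne_zero hu.ne' (h0 ▸ h)
      · exact flimQuad_ne_zero_of_le_sixteen (by linarith) hL2 h1 h16 u h
      · exact (flimQuad_neg_of_eighteen_le hL1 h18
          ⟨Int.floor_le u, (Int.lt_floor_add_one u).le⟩).ne h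
    have hu18 : u < 18 := by
      have := (Int.floor_eq_iff.1 hk17).2
      norm_num at this
      exact this
    rwa [hk17, flimQuad_seventeen_eq_zero_iff hL1 hu18] at h
  · rintro rfl
    have hroot := flimRoot_mem_Ico hL1 hL2
    have hk17 : ⌊flimRoot L⌋ = 17 :=
      Int.floor_eq_iff.2 ⟨by exact_mod_cast hroot.1, by norm_num; exact hroot.2⟩
    rw [hk17, flimQuad_seventeen_eq_zero_iff hL1 hroot.2]

end

lemma nine_div_thirteen_lt_log_two : 9 / 13 < log 2 := by
  linarith [log_two_gt_d9]

lemma log_two_lt_twentyfive_div_thirtysix : log 2 < 25 / 36 := by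
  linarith [log_two_lt_d9]

lemma Flim_eq_two_mul_iff {s : ℝ} (hs : 0 < s) :
    Flim s = 2 * s ↔ 2 * log 2 * s = flimRoot (log 2) := by
  have hL := nine_div_thirteen_lt_log_two
  rw [Flim_eq, sub_div_eq_two_mul_iff_flimQuad _ (by linarith) hs.ne',
    flimQuad_floor_eq_zero_iff hL log_two_lt_twentyfive_div_thirtysix (by positivity)]

theorem solutions_of_F_eq_two_s :
    {s : ℝ | 0 ≤ s ∧ Flim s = 2 * s} =
      {0, (52 * Real.log 2 - Real.sqrt (2704 * Real.log 2 ^ 2 - 1872 * Real.log 2)) /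
          (4 * Real.log 2)} := by
  have hL : 0 < log 2 := by linarith [nine_div_thirteen_lt_log_two]
  have hroot := flimRoot_mem_Ico nine_div_thirteen_lt_log_two log_two_lt_twentyfive_div_thirtysix
  have hs₁ : (52 * log 2 - √(2704 * log 2 ^ 2 - 1872 * log 2)) / (4 * log 2) =
      flimRoot (log 2) / (2 * log 2) := by
    rw [flimRoot]; field_simp; ring
  ext s
  simp only [mem_ofPred_eq, mem_insert_iff, mem_singleton_iff, hs₁]
  constructor
  · rintro ⟨hs0, h⟩
    rcases hs0.eq_or_lt with rfl | hs
    · exact Or.inl rfl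
    rw [Flim_eq_two_mul_iff hs] at h
    exact Or.inr (by rw [← h]; field_simp)
  · rintro (rfl | rfl)
    · simp [Flim]
    · have hs : 0 < flimRoot (log 2) / (2 * log 2) :=
        div_pos (by linarith [hroot.1]) (by positivity)
      refine ⟨hs.le, (Flim_eq_two_mul_iff hs).2 ?_⟩
      field_simp
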